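/- Let n = k² be a perfect square with n > 9, and let γ be an integer with √n ≤ γ ≤ n − √n such that γ divides n − √n; set α_γ := γ/(1 + γ). In the lollipop graph L_n, the price of fairness satisfies PoF(L_n, α_γ) > 1 − (1/√n + 2/(√n − 1)). -/

import Mathlib

open Finset

/-- Number of edges of `G` with both endpoints in `S`. -/
def edgesIn {V : Type*} [Fintype V] [DecidableEq V] (G : SimpleGraph V)
    [DecidableRel G.Adj] (S : Finset V) : ℕ :=
  (G.edgeFinset.filter (fun e => ∀ v ∈ e, v ∈ S)).card

/-- Density `ρ(S) = 2 e(S) / |S|` of the subgraph induced by `S`. -/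
noncomputable def rho {V : Type*} [Fintype V] [DecidableEq V] (G : SimpleGraph V)
    [DecidableRel G.Adj] (S : Finset V) : ℝ :=
  2 * (edgesIn G S : ℝ) / S.card

/-- Fairness regularizer `r1(S) = |S ∩ Sp| / |S|`. -/
noncomputable def r1 {V : Type*} [DecidableEq V] (Sp S : Finset V) : ℝ :=
  ((S ∩ Sp).card : ℝ) / S.card

/-- The lollipop graph `L_n` on `n = k²` vertices: vertices `0, …, k-1` form a
clique (the unprotected vertices), vertices `k, …, k²-1` form a path (the
protected vertices), and one endpoint of the path (vertex `k`) is joined to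
one vertex of the clique (vertex `k-1`). -/
def lollipop (k : ℕ) : SimpleGraph (Fin (k * k)) where
  Adj u v := u ≠ v ∧ ((u.val < k ∧ v.val < k) ∨
      (u.val + 1 = v.val ∧ k ≤ v.val) ∨ (v.val + 1 = u.val ∧ k ≤ u.val))
  symm := by
    constructor
    intro u v h
    refine ⟨Ne.symm h.1, ?_⟩
    rcases h.2 with h | h | h
    · exact Or.inl ⟨h.2, h.1⟩
    · exact Or.inr (Or.inr h)
    · exact Or.inr (Or.inl h)
  loopless := by constructor; intro v h; exact h.1 rfl

instance lollipopDecAdj (k : ℕ) : DecidableRel (lollipop k).Adj :=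
  fun _ _ => inferInstanceAs (Decidable (_ ∧ _))

/-- The protected subset of the lollipop graph: the vertices of the path. -/
def lollipopProtected (k : ℕ) : Finset (Fin (k * k)) :=
  Finset.univ.filter (fun v => k ≤ v.val)

/-- The vertex set of the clique `C_√n` in the lollipop graph. -/
def lollipopClique (k : ℕ) : Finset (Fin (k * k)) :=
  Finset.univ.filter (fun v => v.val < k)

/-- Density of the densest subgraph: `ρ*_G = max_{∅ ≠ S ⊆ V} ρ(S)`. -/
noncomputable def rhoStar {V : Type*} [Fintype V] [DecidableEq V] (G : SimpleGraph V)
    [DecidableRel G.Adj] : ℝ :=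
  sSup {x : ℝ | ∃ S : Finset V, S.Nonempty ∧ rho G S = x}

/-- Density of the densest subgraph at fairness level `α`:
`ρ*_G(α) = max {ρ(S) : ∅ ≠ S ⊆ V, r1(S) = α}`. -/
noncomputable def rhoStarAlpha {V : Type*} [Fintype V] [DecidableEq V] (G : SimpleGraph V)
    [DecidableRel G.Adj] (Sp : Finset V) (α : ℝ) : ℝ :=
  sSup {x : ℝ | ∃ S : Finset V, S.Nonempty ∧ r1 Sp S = α ∧ rho G S = x}

/-- Price of fairness `PoF(G, α) = 1 - ρ*_G(α) / ρ*_G`. -/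
noncomputable def PoF {V : Type*} [Fintype V] [DecidableEq V] (G : SimpleGraph V)
    [DecidableRel G.Adj] (Sp : Finset V) (α : ℝ) : ℝ :=
  1 - rhoStarAlpha G Sp α / rhoStar G

/-!
The clique has density `k - 1`, so `ρ* ≥ k - 1`. A set `S` with `r1(S) = γ/(1+γ)` has `m ≥ 1`
clique vertices and `γ m` path vertices. Charging every edge that meets the path to its endpoint
farther from the clique, each path vertex carries at most one edge, so
`2 e(S) ≤ m(m-1) + 2γm` and `ρ(S) ≤ (k - 1 + 2γ)/(1 + γ) < (3k - 1)/k` once `γ ≥ k`.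
Dividing by `k - 1` gives exactly `1/k + 2/(k-1)`.
-/

section EdgeCounting

variable {V : Type*} [Fintype V] [DecidableEq V] (G : SimpleGraph V) [DecidableRel G.Adj]

lemma edgeFinset_filter_subset_image_offDiag (S : Finset V) :
    G.edgeFinset.filter (fun e => ∀ v ∈ e, v ∈ S) ⊆ S.offDiag.image Sym2.mk.uncurry := by
  intro e he
  induction e using Sym2.ind with
  | _ a b =>
    simp only [mem_filter, SimpleGraph.mem_edgeFinset, SimpleGraph.mem_edgeSet, Sym2.mem_iff,
      forall_eq_or_imp, forall_eq] at he
    exact mem_image.2 ⟨(a, b), mem_offDiag.2 ⟨he.2.1, he.2.2, he.1.ne⟩, rfl⟩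

lemma edgesIn_le_choose_two (S : Finset V) : edgesIn G S ≤ (#S).choose 2 :=
  Sym2.card_image_offDiag S ▸ card_le_card (edgeFinset_filter_subset_image_offDiag G S)

lemma SimpleGraph.IsClique.edgesIn_eq_choose_two {S : Finset V} (hS : G.IsClique (S : Set V)) :
    edgesIn G S = (#S).choose 2 := by
  rw [← Sym2.card_image_offDiag, edgesIn]
  refine congrArg card (subset_antisymm (edgeFinset_filter_subset_image_offDiag G S) ?_)
  intro e he
  obtain ⟨⟨a, b⟩, hab, rfl⟩ := mem_image.1 he
  obtain ⟨ha, hb, hne⟩ := mem_offDiag.1 hab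
  simp only [Function.uncurry_apply_pair, mem_filter, SimpleGraph.mem_edgeFinset,
    SimpleGraph.mem_edgeSet, Sym2.mem_iff, forall_eq_or_imp, forall_eq]
  exact ⟨hS ha hb hne, ha, hb⟩

lemma edgesIn_le_edgesIn_sdiff_add_card_inter (P S : Finset V) (f : V → V)
    (hf : ∀ u v, G.Adj u v → v ∈ P → u = f v ∨ (u ∈ P ∧ v = f u)) :
    edgesIn G S ≤ edgesIn G (S \ P) + #(S ∩ P) := by
  have hsub : G.edgeFinset.filter (fun e => ∀ v ∈ e, v ∈ S) ⊆
      G.edgeFinset.filter (fun e => ∀ v ∈ e, v ∈ S \ P) ∪ (S ∩ P).image (fun v => s(f v, v)) := by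
    intro e he
    induction e using Sym2.ind with
    | _ a b =>
      simp only [mem_filter, SimpleGraph.mem_edgeFinset, SimpleGraph.mem_edgeSet, Sym2.mem_iff,
        forall_eq_or_imp, forall_eq] at he
      obtain ⟨hab, ha, hb⟩ := he
      simp only [mem_union, mem_filter, mem_image, mem_inter, mem_sdiff,
        SimpleGraph.mem_edgeFinset, SimpleGraph.mem_edgeSet, Sym2.mem_iff, forall_eq_or_imp,
        forall_eq]
      by_cases haP : a ∈ P
      · rcases hf b a hab.symm haP with rfl | ⟨hbP, rfl⟩
        · exact Or.inr ⟨a, ⟨ha, haP⟩, Sym2.eq_swap⟩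
        · exact Or.inr ⟨b, ⟨hb, hbP⟩, rfl⟩
      by_cases hbP : b ∈ P
      · rcases hf a b hab hbP with rfl | ⟨haP', -⟩
        · exact Or.inr ⟨b, ⟨hb, hbP⟩, rfl⟩
        · exact absurd haP' haP
      exact Or.inl ⟨hab, ⟨ha, haP⟩, hb, hbP⟩
  calc edgesIn G S ≤ #(G.edgeFinset.filter (fun e => ∀ v ∈ e, v ∈ S \ P) ∪
        (S ∩ P).image (fun v => s(f v, v))) := card_le_card hsub
    _ ≤ edgesIn G (S \ P) + #(S ∩ P) := (card_union_le _ _).trans (Nat.add_le_add_left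
        card_image_le _)

lemma rho_le_rhoStar {S : Finset V} (hS : S.Nonempty) : rho G S ≤ rhoStar G :=
  le_csSup ((Set.finite_range (rho G)).subset (by rintro _ ⟨S, -, rfl⟩; exact ⟨S, rfl⟩)).bddAbove
    ⟨S, hS, rfl⟩

lemma rhoStarAlpha_le {Sp : Finset V} {α b : ℝ} (hb : 0 ≤ b)
    (h : ∀ S : Finset V, S.Nonempty → r1 Sp S = α → rho G S ≤ b) :
    rhoStarAlpha G Sp α ≤ b :=
  Real.sSup_le (by rintro _ ⟨S, hS, hα, rfl⟩; exact h S hS hα) hb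

end EdgeCounting

lemma card_inter_eq_mul_card_sdiff_of_r1_eq {V : Type*} [DecidableEq V] (Sp S : Finset V)
    {γ : ℝ} (hγ : 1 + γ ≠ 0) (h : r1 Sp S = γ / (1 + γ)) :
    (#(S ∩ Sp) : ℝ) = γ * #(S \ Sp) := by
  rcases S.eq_empty_or_nonempty with rfl | hS
  · simp
  have hsplit : (#S : ℝ) = #(S ∩ Sp) + #(S \ Sp) := by
    exact_mod_cast (card_inter_add_card_sdiff S Sp).symm
  rw [r1, div_eq_div_iff (by exact_mod_cast hS.card_pos.ne') hγ, hsplit] at h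
  linear_combination h

section Lollipop

def lollipopPred (k : ℕ) (v : Fin (k * k)) : Fin (k * k) :=
  ⟨v.val - 1, (v.val.sub_le 1).trans_lt v.isLt⟩

lemma lollipop_adj_of_mem_protected {k : ℕ} {u v : Fin (k * k)} (h : (lollipop k).Adj u v)
    (hv : v ∈ lollipopProtected k) :
    u = lollipopPred k v ∨ (u ∈ lollipopProtected k ∧ v = lollipopPred k u) := by
  simp only [lollipop, lollipopProtected, lollipopPred, mem_filter, mem_univ, true_and,
    Fin.ext_iff] at h hv ⊢
  omega

lemma sdiff_lollipopProtected_subset (k : ℕ) (S : Finset (Fin (k * k))) :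
    S \ lollipopProtected k ⊆ lollipopClique k := by
  intro v hv
  simp only [lollipopProtected, lollipopClique, mem_sdiff, mem_filter, mem_univ, true_and,
    not_le] at hv ⊢
  exact hv.2

lemma lollipopClique_card (k : ℕ) : #(lollipopClique k) = k := by
  rw [lollipopClique, Fin.card_filter_val_lt]
  exact min_eq_right (Nat.le_mul_self k)

lemma lollipop_isClique (k : ℕ) : (lollipop k).IsClique (lollipopClique k : Set (Fin (k * k))) := by
  intro u hu v hv huv
  simp only [lollipopClique, coe_filter, mem_univ, true_and, Set.mem_ofPred_eq] at hu hv
  exact ⟨huv, Or.inl ⟨hu, hv⟩⟩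

lemma rho_lollipopClique {k : ℕ} (hk : 0 < k) : rho (lollipop k) (lollipopClique k) = k - 1 := by
  have hk' : (k : ℝ) ≠ 0 := by positivity
  rw [rho, (lollipop_isClique k).edgesIn_eq_choose_two, lollipopClique_card, Nat.cast_choose_two]
  field_simp

lemma rho_lollipop_le_of_r1_eq {k : ℕ} {γ : ℝ} (hγ : 0 ≤ γ) {S : Finset (Fin (k * k))}
    (hS : S.Nonempty) (h : r1 (lollipopProtected k) S = γ / (1 + γ)) :
    rho (lollipop k) S ≤ (k - 1 + 2 * γ) / (1 + γ) := by
  set P := lollipopProtected k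
  set m := #(S \ P)
  have hp : (#(S ∩ P) : ℝ) = γ * m :=
    card_inter_eq_mul_card_sdiff_of_r1_eq P S (by positivity) h
  have hcard : (#S : ℝ) = m * (1 + γ) := by
    rw [← card_inter_add_card_sdiff S P, Nat.cast_add, hp]
    ring
  have hm : (1 : ℝ) ≤ m := by
    have : (0 : ℝ) < m * (1 + γ) := hcard ▸ (Nat.cast_pos.2 hS.card_pos)
    exact_mod_cast Nat.one_le_iff_ne_zero.2 (by rintro h0; simp [h0] at this)
  have hmk : (m : ℝ) ≤ k := by
    exact_mod_cast lollipopClique_card k ▸ card_le_card (sdiff_lollipopProtected_subset k S)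
  have hedges : 2 * (edgesIn (lollipop k) S : ℝ) ≤ m * (m - 1) + 2 * (γ * m) := by
    have := (edgesIn_le_edgesIn_sdiff_add_card_inter (lollipop k) P S (lollipopPred k)
      fun _ _ => lollipop_adj_of_mem_protected).trans
      (Nat.add_le_add_right (edgesIn_le_choose_two (lollipop k) (S \ P)) _)
    have := (Nat.cast_le (α := ℝ)).2 this
    rw [Nat.cast_add, Nat.cast_choose_two, hp] at this
    linarith
  calc rho (lollipop k) S ≤ (m * (m - 1) + 2 * (γ * m)) / (m * (1 + γ)) := by
        rw [rho, hcard]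
        gcongr
    _ = (m - 1 + 2 * γ) / (1 + γ) := by
        field_simp
    _ ≤ (k - 1 + 2 * γ) / (1 + γ) := by gcongr

end Lollipop

theorem stmt9_general (k : ℕ) (hk : 2 ≤ k)
    (γ : ℕ) (hγ1 : k ≤ γ) :
    1 - (1 / (k : ℝ) + 2 / ((k : ℝ) - 1)) <
      PoF (lollipop k) (lollipopProtected k) ((γ : ℝ) / (1 + γ)) := by
  have hk1 : (1 : ℝ) < k := by exact_mod_cast hk
  set b : ℝ := (k - 1 + 2 * γ) / (1 + γ)
  have hb : 0 ≤ b := div_nonneg (by linarith [γ.cast_nonneg (α := ℝ)]) (by positivity)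
  have hR : (k : ℝ) - 1 ≤ rhoStar (lollipop k) :=
    rho_lollipopClique (k := k) (by omega) ▸ rho_le_rhoStar _
      (card_pos.1 (by rw [lollipopClique_card]; omega))
  have hA : rhoStarAlpha (lollipop k) (lollipopProtected k) (γ / (1 + γ)) ≤ b :=
    rhoStarAlpha_le _ hb fun _ hS h => rho_lollipop_le_of_r1_eq γ.cast_nonneg hS h
  have hbk : b < (3 * k - 1) / k := by
    have hγk : (k : ℝ) ≤ γ := by exact_mod_cast hγ1
    rw [div_lt_div_iff₀ (by positivity) (by positivity)]
    nlinarith [mul_le_mul_of_nonneg_right hγk (by linarith : (0 : ℝ) ≤ k - 1)]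
  rw [PoF, sub_lt_sub_iff_left]
  calc rhoStarAlpha (lollipop k) (lollipopProtected k) (γ / (1 + γ)) / rhoStar (lollipop k)
      ≤ b / rhoStar (lollipop k) := div_le_div_of_nonneg_right hA (by linarith)
    _ ≤ b / (k - 1) := div_le_div_of_nonneg_left hb (by linarith) hR
    _ < (3 * k - 1) / k / (k - 1) := div_lt_div_of_pos_right hbk (by linarith)
    _ = 1 / k + 2 / (k - 1) := by
        field_simp [show (k : ℝ) - 1 ≠ 0 by linarith]
        ring

/-- For a perfect square `n = k² > 9` and an integer `γ` with
`√n ≤ γ ≤ n - √n` dividing `n - √n`, letting `α_γ = γ/(1+γ)`, the price of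
fairness of the lollipop graph satisfies
`PoF(L_n, α_γ) > 1 - (1/√n + 2/(√n - 1))`. -/
theorem stmt9 (k : ℕ) (hk : 2 ≤ k) (hn : 9 < k * k)
    (γ : ℕ) (hγ1 : k ≤ γ) (hγ2 : γ ≤ k * k - k) (hdvd : γ ∣ (k * k - k)) :
    1 - (1 / (k : ℝ) + 2 / ((k : ℝ) - 1)) <
      PoF (lollipop k) (lollipopProtected k) ((γ : ℝ) / (1 + γ)) :=
  stmt9_general k hk γ hγ1
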